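/- Let τ ∈ ℕ, and for each t ∈ Fin τ let w_t ≥ 0, v_t ∈ [0,1], q_t ∈ (0,1). Define f(ε) = Σ_t w_t · L(σ(logit q_t + ε), v_t). Suppose there exist indices t and s with w_t · v_t > 0 and w_s · (1 − v_s) > 0. Then f(ε) → ∞ as ε → +∞ and as ε → −∞, and f attains its global minimum at a unique point ε* ∈ ℝ, which is the unique solution of f′(ε) = 0, i.e. of Σ_t w_t · (v_t − σ(logit q_t + ε)) = 0. -/

import Mathlib

open Real Finset Filter

/-- The _root_.sigmoid function `σ(x) = eˣ / (1 + eˣ)`. -/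
noncomputable def sigmoid (x : ℝ) : ℝ := Real.exp x / (1 + Real.exp x)

/-- The logit function `logit q = log (q / (1 - q))`. -/
noncomputable def logit (q : ℝ) : ℝ := Real.log (q / (1 - q))

/-- The binary cross-entropy loss `L(ŷ, y) = -(y log ŷ + (1-y) log (1-ŷ))`. -/
noncomputable def bce (yhat y : ℝ) : ℝ := -(y * Real.log yhat + (1 - y) * Real.log (1 - yhat))

lemma one_add_exp_pos (x : ℝ) : 0 < 1 + Real.exp x := by positivity

lemma sigmoid_eq (x : ℝ) : _root_.sigmoid x = (1 + Real.exp (-x))⁻¹ := by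
  unfold _root_.sigmoid
  rw [Real.exp_neg]
  have := Real.exp_pos x
  field_simp
  ring

lemma sigmoid_pos (x : ℝ) : 0 < _root_.sigmoid x := by
  unfold _root_.sigmoid; positivity

lemma sigmoid_lt_one (x : ℝ) : _root_.sigmoid x < 1 := by
  unfold _root_.sigmoid
  rw [div_lt_one (one_add_exp_pos x)]
  linarith

lemma sigmoid_strictMono : StrictMono _root_.sigmoid := by
  intro x y hxy
  rw [sigmoid_eq, sigmoid_eq]
  have h1 : 0 < 1 + Real.exp (-y) := one_add_exp_pos _
  have h2 : Real.exp (-y) < Real.exp (-x) := Real.exp_lt_exp.mpr (by linarith)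
  gcongr

lemma continuous_sigmoid' : Continuous _root_.sigmoid := by
  unfold _root_.sigmoid
  exact Real.continuous_exp.div (continuous_const.add Real.continuous_exp)
    (fun x => ne_of_gt (one_add_exp_pos x))

lemma tendsto_sigmoid_atTop : Tendsto _root_.sigmoid atTop (nhds 1) := by
  have h0 : Tendsto (fun x : ℝ => Real.exp (-x)) atTop (nhds 0) :=
    Real.tendsto_exp_atBot.comp tendsto_neg_atTop_atBot
  have h : Tendsto (fun x : ℝ => 1 + Real.exp (-x)) atTop (nhds 1) := by
    simpa using h0.const_add 1
  have he : _root_.sigmoid = fun x => (1 + Real.exp (-x))⁻¹ := funext sigmoid_eq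
  rw [he]
  simpa using h.inv₀ one_ne_zero

lemma tendsto_sigmoid_atBot : Tendsto _root_.sigmoid atBot (nhds 0) := by
  have h0 : Tendsto (fun x : ℝ => Real.exp (-x)) atBot atTop :=
    Real.tendsto_exp_atTop.comp tendsto_neg_atBot_atTop
  have h : Tendsto (fun x : ℝ => 1 + Real.exp (-x)) atBot atTop :=
    tendsto_atTop_add_const_left _ 1 h0
  have he : _root_.sigmoid = fun x => (1 + Real.exp (-x))⁻¹ := funext sigmoid_eq
  rw [he]
  exact tendsto_inv_atTop_zero.comp h

lemma bce_sigmoid (x y : ℝ) : bce (_root_.sigmoid x) y = Real.log (1 + Real.exp x) - y * x := by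
  unfold bce _root_.sigmoid
  have h : (0:ℝ) < 1 + Real.exp x := one_add_exp_pos x
  have h1 : 1 - Real.exp x / (1 + Real.exp x) = (1 + Real.exp x)⁻¹ := by field_simp; ring
  rw [h1, Real.log_div (Real.exp_ne_zero x) (ne_of_gt h), Real.log_exp, Real.log_inv]
  ring

lemma hasDerivAt_term (a v ε : ℝ) :
    HasDerivAt (fun ε => Real.log (1 + Real.exp (a + ε)) - v * (a + ε))
      (_root_.sigmoid (a + ε) - v) ε := by
  have h1 : HasDerivAt (fun ε : ℝ => a + ε) 1 ε := (hasDerivAt_id ε).const_add a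
  have h2 : HasDerivAt (fun ε : ℝ => Real.exp (a + ε)) (Real.exp (a + ε)) ε := by
    simpa using h1.exp
  have h3 : HasDerivAt (fun ε : ℝ => 1 + Real.exp (a + ε)) (Real.exp (a + ε)) ε :=
    h2.const_add 1
  have h4 := h3.log (ne_of_gt (one_add_exp_pos (a + ε)))
  have h5 : HasDerivAt (fun ε : ℝ => v * (a + ε)) v ε := by simpa using h1.const_mul v
  simpa [_root_.sigmoid] using h4.fun_sub h5

lemma term_nonneg (v x : ℝ) (h0 : 0 ≤ v) (h1 : v ≤ 1) :
    0 ≤ Real.log (1 + Real.exp x) - v * x := by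
  have hx : x ≤ Real.log (1 + Real.exp x) := by
    rw [Real.le_log_iff_exp_le (one_add_exp_pos x)]
    linarith
  have h0' : 0 ≤ Real.log (1 + Real.exp x) :=
    Real.log_nonneg (by linarith [Real.exp_pos x])
  nlinarith

/-- Under the nondegeneracy condition that some `w_t v_t > 0` and some `w_s (1 - v_s) > 0`,
the weighted targeting loss `f(ε) = Σ_t w_t L(σ(logit q_t + ε), v_t)` tends to `+∞` in both
directions, attains its global minimum at a unique point `ε*`, and `ε*` is the unique
solution of `f'(ε) = 0`, i.e. of `Σ_t w_t (v_t - σ(logit q_t + ε)) = 0`. -/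
theorem stmt_5 (τ : ℕ) (w v q : Fin τ → ℝ)
    (hw : ∀ t, 0 ≤ w t) (hv : ∀ t, v t ∈ Set.Icc (0 : ℝ) 1)
    (hq : ∀ t, q t ∈ Set.Ioo (0 : ℝ) 1)
    (t : Fin τ) (s : Fin τ)
    (ht : 0 < w t * v t) (hs : 0 < w s * (1 - v s)) :
    Tendsto (fun ε : ℝ => ∑ t : Fin τ, w t * bce (_root_.sigmoid (logit (q t) + ε)) (v t))
      atTop atTop ∧
    Tendsto (fun ε : ℝ => ∑ t : Fin τ, w t * bce (_root_.sigmoid (logit (q t) + ε)) (v t))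
      atBot atTop ∧
    ∃ εs : ℝ,
      (∀ ε : ℝ, ε ≠ εs →
        ∑ t : Fin τ, w t * bce (_root_.sigmoid (logit (q t) + εs)) (v t)
          < ∑ t : Fin τ, w t * bce (_root_.sigmoid (logit (q t) + ε)) (v t)) ∧
      (∀ ε : ℝ,
        deriv (fun ε : ℝ => ∑ t : Fin τ, w t * bce (_root_.sigmoid (logit (q t) + ε)) (v t)) ε = 0
          ↔ ε = εs) ∧
      (∀ ε : ℝ,
        ∑ t : Fin τ, w t * (v t - _root_.sigmoid (logit (q t) + ε)) = 0 ↔ ε = εs) := by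
  -- basic positivity facts
  have hwt : 0 < w t ∧ 0 < v t := by
    rcases mul_pos_iff.mp ht with h | h
    · exact h
    · exact absurd h.1 (not_lt.mpr (hw t))
  have hws : 0 < w s ∧ 0 < 1 - v s := by
    rcases mul_pos_iff.mp hs with h | h
    · exact h
    · exact absurd h.1 (not_lt.mpr (hw s))
  set a : Fin τ → ℝ := fun i => logit (q i) with ha
  set F : ℝ → ℝ :=
    fun ε => ∑ i : Fin τ, w i * (Real.log (1 + Real.exp (a i + ε)) - v i * (a i + ε)) with hF
  have hfun : (fun ε : ℝ => ∑ t : Fin τ, w t * bce (_root_.sigmoid (logit (q t) + ε)) (v t)) = F := by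
    funext ε
    exact Finset.sum_congr rfl (fun i _ => by rw [bce_sigmoid])
  rw [hfun]
  set g : ℝ → ℝ := fun ε => ∑ i : Fin τ, w i * (_root_.sigmoid (a i + ε) - v i) with hg
  have hderiv : ∀ ε, HasDerivAt F (g ε) ε := by
    intro ε
    exact HasDerivAt.fun_sum (fun i _ => (hasDerivAt_term (a i) (v i) ε).const_mul (w i))
  have hgmono : StrictMono g := by
    intro x y hxy
    apply Finset.sum_lt_sum
    · intro i _
      have h1 : _root_.sigmoid (a i + x) ≤ _root_.sigmoid (a i + y) :=
        (_root_.sigmoid_strictMono (by linarith : a i + x < a i + y)).le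
      nlinarith [hw i]
    · refine ⟨t, Finset.mem_univ t, ?_⟩
      have h1 : _root_.sigmoid (a t + x) < _root_.sigmoid (a t + y) :=
        sigmoid_strictMono (by linarith : a t + x < a t + y)
      nlinarith [hwt.1]
  have hgcont : Continuous g := by
    apply continuous_finset_sum
    intro i _
    exact continuous_const.mul
      (((continuous_sigmoid'.comp (continuous_const.add continuous_id)).sub continuous_const))
  -- limits of g
  have hgtop : Tendsto g atTop (nhds (∑ i : Fin τ, w i * (1 - v i))) := by
    apply tendsto_finset_sum
    intro i _
    have h1 : Tendsto (fun ε : ℝ => a i + ε) atTop atTop :=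
      tendsto_atTop_add_const_left _ _ tendsto_id
    exact ((_root_.tendsto_sigmoid_atTop.comp h1).sub tendsto_const_nhds).const_mul (w i)
  have hgbot : Tendsto g atBot (nhds (∑ i : Fin τ, w i * (0 - v i))) := by
    apply tendsto_finset_sum
    intro i _
    have h1 : Tendsto (fun ε : ℝ => a i + ε) atBot atBot :=
      tendsto_atBot_add_const_left _ _ tendsto_id
    exact ((_root_.tendsto_sigmoid_atBot.comp h1).sub tendsto_const_nhds).const_mul (w i)
  have hLpos : 0 < ∑ i : Fin τ, w i * (1 - v i) := by
    have hle : w s * (1 - v s) ≤ ∑ i : Fin τ, w i * (1 - v i) := by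
      apply Finset.single_le_sum (f := fun i => w i * (1 - v i))
      · intro i _
        have := (hv i).2
        have := hw i
        nlinarith
      · exact Finset.mem_univ s
    linarith
  have hLneg : (∑ i : Fin τ, w i * (0 - v i)) < 0 := by
    have heq : (∑ i : Fin τ, w i * (0 - v i)) = -(∑ i : Fin τ, w i * v i) := by
      rw [← Finset.sum_neg_distrib]
      exact Finset.sum_congr rfl (fun i _ => by ring)
    have hle : w t * v t ≤ ∑ i : Fin τ, w i * v i := by
      apply Finset.single_le_sum (f := fun i => w i * v i)
      · intro i _
        have := (hv i).1
        have := hw i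
        positivity
      · exact Finset.mem_univ t
    rw [heq]
    linarith
  -- find a sign change of g and a zero by IVT
  obtain ⟨b, hb⟩ := (hgtop.eventually (eventually_gt_nhds hLpos)).exists
  obtain ⟨c, hc⟩ := (hgbot.eventually (eventually_lt_nhds hLneg)).exists
  have hcb : c < b := by
    by_contra h
    push_neg at h
    have := hgmono.monotone h
    linarith
  obtain ⟨εs, hεsmem, hεs⟩ := intermediate_value_Icc hcb.le hgcont.continuousOn
    ⟨hc.le, hb.le⟩
  -- main pieces
  have hgzero : ∀ ε, g ε = 0 ↔ ε = εs := by
    intro ε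
    constructor
    · intro h
      exact hgmono.injective (h.trans hεs.symm)
    · intro h; rw [h]; exact hεs
  have hderiv' : ∀ ε, deriv F ε = g ε := fun ε => (hderiv ε).deriv
  have hFcontOn : ∀ S : Set ℝ, ContinuousOn F S :=
    fun S x _ => (hderiv x).differentiableAt.continuousAt.continuousWithinAt
  refine ⟨?_, ?_, εs, ?_, ?_, ?_⟩
  · -- atTop
    have hlb : ∀ ε : ℝ, (w s * (1 - v s)) * (a s + ε) ≤ F ε := by
      intro ε
      have hx : a s + ε ≤ Real.log (1 + Real.exp (a s + ε)) := by
        rw [Real.le_log_iff_exp_le (one_add_exp_pos _)]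
        linarith [Real.exp_pos (a s + ε)]
      have hsingle : w s * (Real.log (1 + Real.exp (a s + ε)) - v s * (a s + ε)) ≤ F ε := by
        apply Finset.single_le_sum
          (f := fun i => w i * (Real.log (1 + Real.exp (a i + ε)) - v i * (a i + ε)))
        · intro i _
          exact mul_nonneg (hw i) (term_nonneg (v i) (a i + ε) (hv i).1 (hv i).2)
        · exact Finset.mem_univ s
      nlinarith [hws.1]
    apply tendsto_atTop_mono hlb
    exact (tendsto_atTop_add_const_left _ _ tendsto_id).const_mul_atTop hs
  · -- atBot
    have hlb : ∀ ε : ℝ, (w t * v t) * (-(a t + ε)) ≤ F ε := by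
      intro ε
      have hx : 0 ≤ Real.log (1 + Real.exp (a t + ε)) :=
        Real.log_nonneg (by linarith [Real.exp_pos (a t + ε)])
      have hsingle : w t * (Real.log (1 + Real.exp (a t + ε)) - v t * (a t + ε)) ≤ F ε := by
        apply Finset.single_le_sum
          (f := fun i => w i * (Real.log (1 + Real.exp (a i + ε)) - v i * (a i + ε)))
        · intro i _
          exact mul_nonneg (hw i) (term_nonneg (v i) (a i + ε) (hv i).1 (hv i).2)
        · exact Finset.mem_univ t
      nlinarith [hwt.1]
    have hneg : Tendsto (fun ε : ℝ => -(a t + ε)) atBot atTop := by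
      apply tendsto_neg_atBot_atTop.comp
      exact tendsto_atBot_add_const_left _ _ tendsto_id
    exact tendsto_atTop_mono hlb (hneg.const_mul_atTop ht)
  · -- strict minimum
    intro ε hne
    rw [congrFun hfun εs, congrFun hfun ε]
    rcases lt_or_gt_of_ne hne with hlt | hgt
    · have hanti : StrictAntiOn F (Set.Icc ε εs) := by
        apply strictAntiOn_of_deriv_neg (convex_Icc ε εs) (hFcontOn _)
        intro x hx
        rw [interior_Icc] at hx
        rw [hderiv' x]
        have : g x < g εs := hgmono hx.2
        rw [hεs] at this
        exact this
      exact hanti ⟨le_rfl, hlt.le⟩ ⟨hlt.le, le_rfl⟩ hlt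
    · have hmono : StrictMonoOn F (Set.Icc εs ε) := by
        apply strictMonoOn_of_deriv_pos (convex_Icc εs ε) (hFcontOn _)
        intro x hx
        rw [interior_Icc] at hx
        rw [hderiv' x]
        have : g εs < g x := hgmono hx.1
        rw [hεs] at this
        exact this
      exact hmono ⟨le_rfl, hgt.le⟩ ⟨hgt.le, le_rfl⟩ hgt
  · intro ε
    rw [hderiv' ε]
    exact hgzero ε
  · intro ε
    have heq : (∑ i : Fin τ, w i * (v i - _root_.sigmoid (a i + ε))) = -(g ε) := by
      rw [hg, ← Finset.sum_neg_distrib]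
      exact Finset.sum_congr rfl (fun i _ => by ring)
    rw [heq, neg_eq_zero]
    exact hgzero ε
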